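/- For m ≥ 0 and k ≥ 0, (2k+n)!/[2k+n]_μ! = (n!/[n]_μ!) · (⌊(n+1)/2⌋ + 1/2)_k / (⌊(n+1)/2⌋ + μ + 1/2)_k, where (a)_k is the Pochhammer symbol; consequently J_n^μ(x) = (1/[n]_μ!)(x/2)^n · ₁F₂(⌊(n+1)/2⌋+1/2; n+1, ⌊(n+1)/2⌋+μ+1/2; −x²/4). -/

import Mathlib

/-- The deformed integer `[n]_μ = n + μ (1 - (-1)^n)`. -/
noncomputable def dIdx (μ : ℝ) (n : ℕ) : ℝ := n + μ * (1 - (-1 : ℝ) ^ n)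

/-- The deformed factorial `[n]_μ!`. -/
noncomputable def dFact (μ : ℝ) : ℕ → ℝ
  | 0 => 1
  | n + 1 => dIdx μ (n + 1) * dFact μ n

/-- The Pochhammer symbol `(a)_k = a(a+1)⋯(a+k-1)`. -/
noncomputable def poch (a : ℝ) (k : ℕ) : ℝ := ∏ i ∈ Finset.range k, (a + i)

/-- The deformed Bessel function `J_n^μ`. -/
noncomputable def Jmu (μ : ℝ) (n : ℕ) (x : ℝ) : ℝ :=
  ∑' k : ℕ, (-1 : ℝ) ^ k * (Nat.factorial (2 * k + n)) /
      ((Nat.factorial k) * (Nat.factorial (k + n)) * dFact μ (2 * k + n)) *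
    (x / 2) ^ (2 * k + n)


/-!
Write `h = ⌊(n+1)/2⌋`. Going from `2k+n` to `2(k+1)+n` multiplies `m!` by `(m+1)(m+2)` and
`[m]_μ!` by `[m+1]_μ [m+2]_μ`, where `m = 2k+n`. The even one of `m+1, m+2` is left unchanged by
the deformation, and the odd one is `2j+1` with `j = h + k`, deformed to `2j+1+2μ`. So the ratio
`m!/[m]_μ!` gains the factor `(j+1/2)/(j+μ+1/2)`, which is exactly the step of
`(h+1/2)_k/(h+μ+1/2)_k`. Together with `(k+n)! = n! (n+1)_k` this turns the series of `J_n^μ`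
term by term into the `₁F₂` series.
-/

lemma dIdx_two_mul (μ : ℝ) (j : ℕ) : dIdx μ (2 * j) = 2 * j := by
  simp [dIdx]

lemma dIdx_two_mul_add_one (μ : ℝ) (j : ℕ) : dIdx μ (2 * j + 1) = 2 * j + 1 + 2 * μ := by
  simp only [dIdx, (odd_two_mul_add_one j).neg_one_pow]
  push_cast
  ring

lemma dIdx_pos {μ : ℝ} (hμ : 0 ≤ μ) {m : ℕ} (hm : m ≠ 0) : 0 < dIdx μ m := by
  rcases Nat.even_or_odd' m with ⟨j, rfl | rfl⟩
  · rw [dIdx_two_mul]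
    have : (0 : ℝ) < j := by exact_mod_cast Nat.pos_of_ne_zero (by omega)
    positivity
  · rw [dIdx_two_mul_add_one]
    positivity

lemma dFact_pos {μ : ℝ} (hμ : 0 ≤ μ) (m : ℕ) : 0 < dFact μ m := by
  induction m with
  | zero => simp [dFact]
  | succ m ih => exact mul_pos (dIdx_pos hμ m.succ_ne_zero) ih

/-- `j = ⌊(m+1)/2⌋` is chosen so that `2j+1` is the odd one of `m+1, m+2`. -/
lemma dIdx_succ_mul_dIdx_succ_succ (μ : ℝ) (m : ℕ) :
    dIdx μ (m + 1) * dIdx μ (m + 2) * ((((m + 1) / 2 : ℕ) : ℝ) + 1 / 2) =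
      ((m : ℝ) + 1) * ((m : ℝ) + 2) * ((((m + 1) / 2 : ℕ) : ℝ) + μ + 1 / 2) := by
  rcases Nat.even_or_odd' m with ⟨j, rfl | rfl⟩
  · have hj : (2 * j + 1) / 2 = j := by omega
    rw [hj, dIdx_two_mul_add_one, show 2 * j + 2 = 2 * (j + 1) by ring, dIdx_two_mul]
    push_cast
    ring
  · have hj : (2 * j + 1 + 1) / 2 = j + 1 := by omega
    rw [hj, show 2 * j + 1 + 1 = 2 * (j + 1) by ring, dIdx_two_mul,
      show 2 * j + 1 + 2 = 2 * (j + 1) + 1 by ring, dIdx_two_mul_add_one]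
    push_cast
    ring

lemma poch_zero (a : ℝ) : poch a 0 = 1 := Finset.prod_range_zero _

lemma poch_succ (a : ℝ) (k : ℕ) : poch a (k + 1) = poch a k * (a + k) :=
  Finset.prod_range_succ _ _

lemma poch_pos {a : ℝ} (ha : 0 < a) (k : ℕ) : 0 < poch a k :=
  Finset.prod_pos fun i _ => by positivity

lemma factorial_add_eq_mul_poch (n k : ℕ) :
    ((k + n).factorial : ℝ) = n.factorial * poch ((n : ℝ) + 1) k := by
  induction k with
  | zero => simp [poch_zero]
  | succ k ih =>
    rw [Nat.add_right_comm, Nat.factorial_succ, poch_succ]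
    push_cast
    rw [ih]
    ring

lemma factorial_mul_dFact_mul_poch (μ : ℝ) (n k : ℕ) :
    ((2 * k + n).factorial : ℝ) * dFact μ n * poch ((((n + 1) / 2 : ℕ) : ℝ) + μ + 1 / 2) k =
      n.factorial * poch ((((n + 1) / 2 : ℕ) : ℝ) + 1 / 2) k * dFact μ (2 * k + n) := by
  induction k with
  | zero => simp [poch_zero]
  | succ k ih =>
    have step := dIdx_succ_mul_dIdx_succ_succ μ (2 * k + n)
    have hj : (2 * k + n + 1) / 2 = (n + 1) / 2 + k := by omega
    rw [hj] at step
    rw [show 2 * (k + 1) + n = 2 * k + n + 1 + 1 by ring, Nat.factorial_succ, Nat.factorial_succ,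
      dFact, dFact, poch_succ, poch_succ]
    linear_combination (norm := (push_cast; ring1))
      ((2 * k + n + 1 : ℝ) * (2 * k + n + 2) * ((((n + 1) / 2 : ℕ) : ℝ) + k + μ + 1 / 2)) * ih -
        ((n.factorial : ℝ) * poch ((((n + 1) / 2 : ℕ) : ℝ) + 1 / 2) k * dFact μ (2 * k + n)) * step

section

variable {μ : ℝ} (hμ : 0 ≤ μ) (n : ℕ)
include hμ

lemma factorial_div_dFact (k : ℕ) :
    ((2 * k + n).factorial : ℝ) / dFact μ (2 * k + n) =
      (n.factorial / dFact μ n) *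
        poch ((((n + 1) / 2 : ℕ) : ℝ) + 1 / 2) k / poch ((((n + 1) / 2 : ℕ) : ℝ) + μ + 1 / 2) k := by
  have hb : poch ((((n + 1) / 2 : ℕ) : ℝ) + μ + 1 / 2) k ≠ 0 := (poch_pos (by positivity) k).ne'
  have hd := (dFact_pos hμ (2 * k + n)).ne'
  have hd0 := (dFact_pos hμ n).ne'
  have key := factorial_mul_dFact_mul_poch μ n k
  generalize poch ((((n + 1) / 2 : ℕ) : ℝ) + μ + 1 / 2) k = B at *
  generalize poch ((((n + 1) / 2 : ℕ) : ℝ) + 1 / 2) k = A at *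
  field_simp
  linear_combination key

lemma Jmu_term_eq (x : ℝ) (k : ℕ) :
    (-1 : ℝ) ^ k * ((2 * k + n).factorial : ℝ) /
        ((k.factorial : ℝ) * (k + n).factorial * dFact μ (2 * k + n)) * (x / 2) ^ (2 * k + n) =
      (1 / dFact μ n) * (x / 2) ^ n *
        (poch ((((n + 1) / 2 : ℕ) : ℝ) + 1 / 2) k /
            ((k.factorial : ℝ) * poch ((n : ℝ) + 1) k *
              poch ((((n + 1) / 2 : ℕ) : ℝ) + μ + 1 / 2) k) * (-(x ^ 2) / 4) ^ k) := by
  have hpow : (x / 2) ^ (2 * k + n) = (x / 2) ^ n * ((x / 2) ^ 2) ^ k := by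
    rw [← pow_mul, ← pow_add, add_comm]
  have hneg : (-(x ^ 2) / 4) ^ k = (-1 : ℝ) ^ k * ((x / 2) ^ 2) ^ k := by
    rw [← mul_pow]
    ring
  have key := factorial_mul_dFact_mul_poch μ n k
  have hb : (0 : ℝ) < poch ((((n + 1) / 2 : ℕ) : ℝ) + μ + 1 / 2) k := poch_pos (by positivity) k
  have hn : (0 : ℝ) < poch ((n : ℝ) + 1) k := poch_pos (by positivity) k
  have hd := dFact_pos hμ (2 * k + n)
  have hd0 := dFact_pos hμ n
  rw [hpow, hneg, factorial_add_eq_mul_poch n k]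
  generalize poch ((((n + 1) / 2 : ℕ) : ℝ) + μ + 1 / 2) k = B at *
  generalize poch ((((n + 1) / 2 : ℕ) : ℝ) + 1 / 2) k = A at *
  field_simp
  linear_combination ((x / 2) ^ n * ((x / 2) ^ 2) ^ k) * key

end

/-- The coefficient identity
`(2k+n)!/[2k+n]_μ! = (n!/[n]_μ!) (⌊(n+1)/2⌋+1/2)_k / (⌊(n+1)/2⌋+μ+1/2)_k`,
and the resulting `₁F₂` hypergeometric expression for `J_n^μ`. -/
theorem Jmu_hypergeometric (μ : ℝ) (hμ : 0 ≤ μ) (n : ℕ) :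
    (∀ k : ℕ,
      (Nat.factorial (2 * k + n) : ℝ) / dFact μ (2 * k + n) =
        ((Nat.factorial n : ℝ) / dFact μ n) *
          poch (((n + 1) / 2 : ℕ) + 1 / 2) k / poch (((n + 1) / 2 : ℕ) + μ + 1 / 2) k) ∧
    (∀ x : ℝ,
      Jmu μ n x = (1 / dFact μ n) * (x / 2) ^ n *
        ∑' k : ℕ, poch (((n + 1) / 2 : ℕ) + 1 / 2) k /
            ((Nat.factorial k) * poch ((n : ℝ) + 1) k * poch (((n + 1) / 2 : ℕ) + μ + 1 / 2) k) *
          (-(x ^ 2) / 4) ^ k) := by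
  refine ⟨factorial_div_dFact hμ n, fun x => ?_⟩
  rw [Jmu, ← tsum_mul_left]
  exact tsum_congr (Jmu_term_eq hμ n x)
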